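/- arXiv:2001.07790 — 2 statements merged into one kernel-verified Lean document; each statement's English description precedes it below -/
import Mathlib

section
/- Let σ² > 0, τ > τ* > 0, and set w_0 = σ^{-2}/(τ+σ^{-2}), w*_0 = σ^{-2}/(τ*+σ^{-2}), σ_0² = (τ+σ^{-2})^{-1}, σ_1² = (τ+2σ^{-2})^{-1}, σ*_0² = (τ*+σ^{-2})^{-1}, σ*_1² = (τ*+2σ^{-2})^{-1}. Then (1 + σ*_0²/σ*_1²)·w_0 − (1 + σ_0²/σ_1²)·w*_0 = 2σ^{-2}(τ* − τ)/((τ+σ^{-2})(τ*+σ^{-2})), and in particular this quantity is strictly negative. -/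
/-! The ratio of consecutive posterior variances is `σ₀²/σ₁² = (τ + 2σ⁻²)/(τ + σ⁻²)`, so
`1 + σ₀²/σ₁² = (2τ + 3σ⁻²)/(τ + σ⁻²)`. Over the common denominator `(τ + σ⁻²)(τ* + σ⁻²)` the two
terms then differ by `σ⁻²((2τ* + 3σ⁻²) − (2τ + 3σ⁻²)) = 2σ⁻²(τ* − τ)`, negative since `τ* < τ`. -/

section Field

variable {K : Type*} [Field K]

theorem one_add_inv_div_inv_eq {a s : K} (h : a + s ≠ 0) :
    1 + (a + s)⁻¹ / (a + 2 * s)⁻¹ = (2 * a + 3 * s) / (a + s) := by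
  rw [inv_div_inv, one_add_div h]
  ring_nf

theorem young_cohort_gap_eq {a b s : K} (ha : a + s ≠ 0) (hb : b + s ≠ 0) :
    (1 + (b + s)⁻¹ / (b + 2 * s)⁻¹) * (s / (a + s))
      - (1 + (a + s)⁻¹ / (a + 2 * s)⁻¹) * (s / (b + s))
      = 2 * s * (b - a) / ((a + s) * (b + s)) := by
  rw [one_add_inv_div_inv_eq ha, one_add_inv_div_inv_eq hb]
  field_simp
  ring

end Field

theorem young_cohort_gap_neg {K : Type*} [Field K] [LinearOrder K] [IsStrictOrderedRing K]
    {a b s : K} (hs : 0 < s) (hb : 0 < b + s) (hba : b < a) :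
    2 * s * (b - a) / ((a + s) * (b + s)) < 0 := by
  have ha : 0 < a + s := by linarith
  apply div_neg_of_neg_of_pos
  · exact mul_neg_of_pos_of_neg (by positivity) (sub_neg.2 hba)
  · positivity

/-- Key identity for counter-cyclicality (young cohort terms):
`(1 + σ*₀²/σ*₁²)·w₀ − (1 + σ₀²/σ₁²)·w*₀ = 2σ⁻²(τ* − τ)/((τ+σ⁻²)(τ*+σ⁻²)) < 0`. -/
theorem young_cohort_identity
    (σ2 τ τs : ℝ) (hσ : 0 < σ2) (hτs : 0 < τs) (hττ : τs < τ) :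
    (1 + (τs + σ2⁻¹)⁻¹ / (τs + 2 * σ2⁻¹)⁻¹) * (σ2⁻¹ / (τ + σ2⁻¹))
      - (1 + (τ + σ2⁻¹)⁻¹ / (τ + 2 * σ2⁻¹)⁻¹) * (σ2⁻¹ / (τs + σ2⁻¹))
      = 2 * σ2⁻¹ * (τs - τ) / ((τ + σ2⁻¹) * (τs + σ2⁻¹))
    ∧ (1 + (τs + σ2⁻¹)⁻¹ / (τs + 2 * σ2⁻¹)⁻¹) * (σ2⁻¹ / (τ + σ2⁻¹))
      - (1 + (τ + σ2⁻¹)⁻¹ / (τ + 2 * σ2⁻¹)⁻¹) * (σ2⁻¹ / (τs + σ2⁻¹)) < 0 := by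
  have hs : 0 < σ2⁻¹ := inv_pos.2 hσ
  have hτs' : 0 < τs + σ2⁻¹ := by positivity
  have hτ' : 0 < τ + σ2⁻¹ := by linarith
  have heq := young_cohort_gap_eq hτ'.ne' hτs'.ne'
  exact ⟨heq, heq ▸ young_cohort_gap_neg hs hτs' hττ⟩
end

section
/- Equal demographics imply counter-cyclical domestic holdings: let σ² > 0, τ > τ* > 0, and φ > 0, with w_0, w_1ω, w*_0, w*_1ω and σ_0², σ_1², σ*_0², σ*_1² as defined from τ, τ*, σ². Then the quantity (φ²/(σ_0²σ*_0²))[(1+σ*_0²/σ*_1²)w_0 − (1+σ_0²/σ_1²)w*_0] + (φ²/(σ_1²σ*_1²))[(1+σ*_1²/σ*_0²)w_1ω − (1+σ_1²/σ_0²)w*_1ω] is strictly negative. -/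
/-!
Write `s = σ⁻²` and measure everything in precisions: `p = τ + s`, `p' = τ + 2s` at home and
`q = τ* + s`, `q' = τ* + 2s` abroad. Each of the two cohort terms then collapses to
`φ² s ((q + q') - (p + p'))`, so the sum is `4 φ² s (τ* - τ)`, negative since `τ* < τ`.
-/

lemma cohort_term_eq {K : Type*} [Field K] (φ s p p' q q' : K) (hp : p ≠ 0) (hq : q ≠ 0) :
    φ ^ 2 / (p⁻¹ * q⁻¹) * ((1 + q⁻¹ / q'⁻¹) * (s / p) - (1 + p⁻¹ / p'⁻¹) * (s / q))
      = φ ^ 2 * s * ((q + q') - (p + p')) := by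
  rw [inv_div_inv, inv_div_inv]
  field_simp

/-- With equal demographics, the sensitivity of domestic holdings of the domestic
asset to current domestic output is strictly negative (retrenchment after busts). -/
theorem equal_demographics_countercyclical
    (σ2 τ τs φ : ℝ) (hσ : 0 < σ2) (hτs : 0 < τs) (hττ : τs < τ) (hφ : 0 < φ) :
    (φ ^ 2 / ((τ + σ2⁻¹)⁻¹ * (τs + σ2⁻¹)⁻¹)) *
        ((1 + (τs + σ2⁻¹)⁻¹ / (τs + 2 * σ2⁻¹)⁻¹) * (σ2⁻¹ / (τ + σ2⁻¹))
          - (1 + (τ + σ2⁻¹)⁻¹ / (τ + 2 * σ2⁻¹)⁻¹) * (σ2⁻¹ / (τs + σ2⁻¹)))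
      + (φ ^ 2 / ((τ + 2 * σ2⁻¹)⁻¹ * (τs + 2 * σ2⁻¹)⁻¹)) *
        ((1 + (τs + 2 * σ2⁻¹)⁻¹ / (τs + σ2⁻¹)⁻¹) * (σ2⁻¹ / (τ + 2 * σ2⁻¹))
          - (1 + (τ + 2 * σ2⁻¹)⁻¹ / (τ + σ2⁻¹)⁻¹) * (σ2⁻¹ / (τs + 2 * σ2⁻¹))) < 0 := by
  have hs : 0 < σ2⁻¹ := inv_pos.mpr hσ
  rw [cohort_term_eq _ _ _ _ _ _ (ne_of_gt (by linarith)) (ne_of_gt (by linarith)),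
    cohort_term_eq _ _ _ _ _ _ (ne_of_gt (by linarith)) (ne_of_gt (by linarith)), ← mul_add]
  exact mul_neg_of_pos_of_neg (by positivity) (by linarith)
end
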